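/- (Theorem 1, net production zone) Let δ_t ∈ [0, (T−t−1)·v̄] satisfy −π_t⁻ ∈ h_{t+1}(δ_t). Then the decision d*_i = l_i(π_t⁻) for every i together with v* = min{v̄, max{y_t − δ_t, 0}} is an optimal solution of the Bellman equation at time t whenever v* + Σ_i d*_i < r_t; equivalently, (v*, d*) solves the convex program P⁻: maximize Σ_i U_i(d_i) − π_t⁻(v + Σ_i d_i − r_t) + V̄_{t+1}(y_t − v) subject to v + Σ_i d_i ≤ r_t, d ∈ D, v ∈ [0, min{v̄, y_t}], with the net-production constraint inactive. -/

import Mathlib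

open MeasureTheory Set

/-- NEM X payment for net consumption `z` with buy price `pp` and sell price `pm`. -/
noncomputable def NEMPayment (pp pm z : ℝ) : ℝ := pp * max z 0 - pm * max (-z) 0

/-- The superdifferential of a function `f : ℝ → ℝ` (viewed as a concave function
on `[0, ∞)`) at a point `y`. -/
def superdiff (f : ℝ → ℝ) (y : ℝ) : Set ℝ :=
  {s | ∀ z, 0 ≤ z → f z ≤ f y + s * (z - y)}

/-- Data of the EV-charging / flexible-consumption dynamic program over horizon
`{0, …, T-1}` with `K` flexible loads, under NEM time-of-use prices. -/
structure EVModel (K T : ℕ) (Ω : Type) [MeasurableSpace Ω] where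
  /-- underlying probability measure -/
  μ : Measure Ω
  prob : IsProbabilityMeasure μ
  /-- consumption upper bounds -/
  dbar : Fin K → ℝ
  dbar_pos : ∀ i, 0 < dbar i
  /-- device utility functions -/
  U : Fin K → ℝ → ℝ
  U_strictConcave : ∀ i, StrictConcaveOn ℝ (Icc 0 (dbar i)) (U i)
  U_strictMono : ∀ i, StrictMonoOn (U i) (Icc 0 (dbar i))
  U_diff : ∀ i, ∀ x ∈ Icc 0 (dbar i), DifferentiableWithinAt ℝ (U i) (Icc 0 (dbar i)) x
  U_contDeriv : ∀ i, ContinuousOn (fun x => derivWithin (U i) (Icc 0 (dbar i)) x) (Icc 0 (dbar i))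
  U_zero : ∀ i, U i 0 = 0
  /-- renewable processes -/
  r : ℕ → Ω → ℝ
  r_meas : ∀ t, Measurable (r t)
  r_nonneg : ∀ t ω, 0 ≤ r t ω
  r_int : ∀ t, Integrable (r t) μ
  r_indep : ProbabilityTheory.iIndepFun r μ
  /-- time-of-use buy prices `π_t⁺` -/
  pip : ℕ → ℝ
  /-- time-of-use sell prices `π_t⁻` -/
  pim : ℕ → ℝ
  /-- maximal per-period EV charge -/
  vbar : ℝ
  vbar_pos : 0 < vbar
  /-- per-unit penalty for unmet EV demand at the horizon -/
  γ : ℝ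
  /-- `π_off⁻ = min_t π_t⁻` -/
  pioff : ℝ
  pioff_le : ∀ t < T, pioff ≤ pim t
  pioff_attained : ∃ t < T, pioff = pim t
  /-- assumption A1 -/
  A1 : ∀ t < T, 0 < pim t ∧ pim t ≤ pip t ∧ pip t < γ

namespace EVModel

variable {K T : ℕ} {Ω : Type} [MeasurableSpace Ω]

/-- Stage reward `g_t(x_t, v, d)`. -/
noncomputable def stage (M : EVModel K T Ω) (t : ℕ) (rt v : ℝ) (d : Fin K → ℝ) : ℝ :=
  ∑ i, M.U i (d i) - NEMPayment (M.pip t) (M.pim t) (v + ∑ i, d i - rt)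

/-- Feasible decisions `(v, d)` given remaining demand `y`. -/
def feas (M : EVModel K T Ω) (y : ℝ) : Set (ℝ × (Fin K → ℝ)) :=
  {p | p.1 ∈ Icc 0 (min M.vbar y) ∧ ∀ i, p.2 i ∈ Icc 0 (M.dbar i)}

/-- Value function indexed by `k = T - 1 - t`, the number of remaining periods after
the current one. -/
noncomputable def W (M : EVModel K T Ω) : ℕ → ℝ → ℝ → ℝ
  | 0 => fun y rt => sSup ((fun p : ℝ × (Fin K → ℝ) =>
      M.stage (T - 1) rt p.1 p.2 - M.γ * (y - p.1)) '' M.feas y)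
  | (k + 1) => fun y rt => sSup ((fun p : ℝ × (Fin K → ℝ) =>
      M.stage (T - 2 - k) rt p.1 p.2 +
        ∫ ω, M.W k (y - p.1) (M.r (T - 1 - k) ω) ∂M.μ) '' M.feas y)

/-- Value function `V_t(y, r_t)` (the price argument is determined by `t`). -/
noncomputable def V (M : EVModel K T Ω) (t : ℕ) (y rt : ℝ) : ℝ := M.W (T - 1 - t) y rt

/-- Expected value function `V̄_t(y) = E[V_t(y, r_t, π_t)]`. -/
noncomputable def Vbar (M : EVModel K T Ω) (t : ℕ) (y : ℝ) : ℝ := ∫ ω, M.V t y (M.r t ω) ∂M.μ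

/-- Objective of the Bellman equation at time `t` in state `(y, rt)`. -/
noncomputable def bellObj (M : EVModel K T Ω) (t : ℕ) (y rt : ℝ) (p : ℝ × (Fin K → ℝ)) : ℝ :=
  if t = T - 1 then M.stage t rt p.1 p.2 - M.γ * (y - p.1)
  else M.stage t rt p.1 p.2 + ∫ ω, M.V (t + 1) (y - p.1) (M.r (t + 1) ω) ∂M.μ

/-- `(v, d)` is an optimal solution of the Bellman equation at time `t`. -/
def IsBellmanOpt (M : EVModel K T Ω) (t : ℕ) (y rt : ℝ) (p : ℝ × (Fin K → ℝ)) : Prop :=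
  p ∈ M.feas y ∧ ∀ q ∈ M.feas y, M.bellObj t y rt q ≤ M.bellObj t y rt p

/-- Superdifferential `h_t` of the concave expected value function `V̄_t`. -/
noncomputable def h (M : EVModel K T Ω) (t : ℕ) (y : ℝ) : Set ℝ := superdiff (M.Vbar t) y

end EVModel

/-!
Since `π_t⁻ ≤ π_t⁺`, the NEM payment dominates the linear payment `π_t⁻ z` and equals it when
`z ≤ 0`; hence the Bellman objective lies below the objective of `P⁻` and agrees with it wherever
the net-production constraint holds, and it suffices to maximize the objective of `P⁻` over all
feasible decisions. That objective separates: each device term `U_i d - π_t⁻ d` is maximized by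
the clipped first-order solution `d = l_i π_t⁻`, and the charge maximizes the concave function
`v ↦ -π_t⁻ v + V̄_{t+1} (y - v)`, whose unconstrained maximizer is `y - δ_t` by the supergradient
condition, so its maximizer on `[0, min v̄ y]` is the projection of `y - δ_t`.

Concavity of `V̄_{t+1}` comes from backward induction: a Bellman step maximizes a jointly concave
objective over a convex graph, so the value stays concave in `y`; it also stays bounded and
`γ`-Lipschitz in `r_t`, which keeps the expectations integrable.
-/

section NEMPayment

variable {pp pm : ℝ}

lemma NEMPayment_eq_max (h : pm ≤ pp) (z : ℝ) :
    NEMPayment pp pm z = max (pp * z) (pm * z) := by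
  unfold NEMPayment
  rcases le_total z 0 with hz | hz
  · rw [max_eq_right hz, max_eq_left (neg_nonneg.2 hz), max_eq_right (by nlinarith)]
    ring
  · rw [max_eq_left hz, max_eq_right (neg_nonpos.2 hz), max_eq_left (by nlinarith)]
    ring

lemma mul_le_NEMPayment (h : pm ≤ pp) (z : ℝ) : pm * z ≤ NEMPayment pp pm z :=
  NEMPayment_eq_max h z ▸ le_max_right _ _

lemma NEMPayment_of_nonpos {z : ℝ} (hz : z ≤ 0) : NEMPayment pp pm z = pm * z := by
  rw [NEMPayment, max_eq_right hz, max_eq_left (neg_nonneg.2 hz)]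
  ring

lemma abs_NEMPayment_sub_le (h0 : 0 ≤ pm) (h : pm ≤ pp) (z z' : ℝ) :
    |NEMPayment pp pm z - NEMPayment pp pm z'| ≤ pp * |z - z'| := by
  rw [NEMPayment_eq_max h, NEMPayment_eq_max h]
  refine (abs_max_sub_max_le_max _ _ _ _).trans (max_le ?_ ?_)
  · rw [← mul_sub, abs_mul, abs_of_nonneg (h0.trans h)]
  · rw [← mul_sub, abs_mul, abs_of_nonneg h0]
    exact mul_le_mul_of_nonneg_right h (abs_nonneg _)

lemma convexOn_NEMPayment (h : pm ≤ pp) : ConvexOn ℝ univ (NEMPayment pp pm) := by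
  rw [show NEMPayment pp pm = (fun z => pp * z) ⊔ (fun z => pm * z) from
    funext (NEMPayment_eq_max h)]
  exact ((LinearMap.mulLeft ℝ pp).convexOn convex_univ).sup
    ((LinearMap.mulLeft ℝ pm).convexOn convex_univ)

end NEMPayment

section SSup

variable {α : Type*} {S : Set α} {f g : α → ℝ} {c : ℝ}

lemma sSup_image_le_sSup_image_add (hS : S.Nonempty) (hf : BddAbove (f '' S))
    (h : ∀ p ∈ S, g p ≤ f p + c) : sSup (g '' S) ≤ sSup (f '' S) + c :=
  csSup_le (hS.image g) <| forall_mem_image.2 fun p hp =>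
    (h p hp).trans (add_le_add_left (le_csSup hf (mem_image_of_mem f hp)) c)

lemma abs_sSup_image_sub_le (hS : S.Nonempty) (hf : BddAbove (f '' S))
    (hg : BddAbove (g '' S)) (h : ∀ p ∈ S, |f p - g p| ≤ c) :
    |sSup (f '' S) - sSup (g '' S)| ≤ c := by
  have hfg := sSup_image_le_sSup_image_add (g := f) hS hg fun p hp => by
    linarith [(abs_le.1 (h p hp)).2]
  have hgf := sSup_image_le_sSup_image_add (g := g) hS hf fun p hp => by
    linarith [(abs_le.1 (h p hp)).1]
  exact abs_le.2 ⟨by linarith, by linarith⟩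

lemma mul_sSup_add_mul_sSup_le {A B : Set ℝ} (hA : A.Nonempty) (hA' : BddAbove A)
    (hB : B.Nonempty) (hB' : BddAbove B) {a b : ℝ} (ha : 0 ≤ a) (hb : 0 ≤ b)
    (h : ∀ x ∈ A, ∀ y ∈ B, a * x + b * y ≤ c) : a * sSup A + b * sSup B ≤ c := by
  rw [← smul_eq_mul, ← smul_eq_mul, ← Real.sSup_smul_of_nonneg ha,
    ← Real.sSup_smul_of_nonneg hb, ← csSup_add (hA.smul_set) (hA'.smul_of_nonneg ha)
      (hB.smul_set) (hB'.smul_of_nonneg hb)]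
  refine csSup_le (hA.smul_set.add hB.smul_set) ?_
  rintro _ ⟨_, ⟨x, hx, rfl⟩, _, ⟨y, hy, rfl⟩, rfl⟩
  exact h x hx y hy

theorem ConcaveOn.sSup_image {E F : Type*} [AddCommGroup E] [Module ℝ E] [AddCommGroup F]
    [Module ℝ F] {s : Set E} {S : E → Set F} {f : E → F → ℝ} (hs : Convex ℝ s)
    (hf : ConcaveOn ℝ {q : E × F | q.1 ∈ s ∧ q.2 ∈ S q.1} (fun q => f q.1 q.2))
    (hne : ∀ y ∈ s, (S y).Nonempty) (hbdd : ∀ y ∈ s, BddAbove (f y '' S y)) :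
    ConcaveOn ℝ s (fun y => sSup (f y '' S y)) := by
  refine ⟨hs, fun y₁ hy₁ y₂ hy₂ a b ha hb hab => ?_⟩
  have hy := hs hy₁ hy₂ ha hb hab
  refine mul_sSup_add_mul_sSup_le ((hne y₁ hy₁).image _) (hbdd y₁ hy₁) ((hne y₂ hy₂).image _)
    (hbdd y₂ hy₂) ha hb ?_
  rintro _ ⟨p₁, hp₁, rfl⟩ _ ⟨p₂, hp₂, rfl⟩
  have hmem := hf.1 (x := (y₁, p₁)) (y := (y₂, p₂)) ⟨hy₁, hp₁⟩ ⟨hy₂, hp₂⟩ ha hb hab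
  exact (hf.2 (x := (y₁, p₁)) (y := (y₂, p₂)) ⟨hy₁, hp₁⟩ ⟨hy₂, hp₂⟩ ha hb hab).trans
    (le_csSup (hbdd _ hy) (mem_image_of_mem _ hmem.2))

end SSup

section Expectation

variable {Ω : Type*} [MeasurableSpace Ω] {μ : Measure Ω}

lemma concaveOn_integral {E : Type*} [AddCommGroup E] [Module ℝ E] {s : Set E}
    (hs : Convex ℝ s) {F : E → Ω → ℝ} (hF : ∀ ω, ConcaveOn ℝ s (F · ω))
    (hint : ∀ y ∈ s, Integrable (F y) μ) :
    ConcaveOn ℝ s (fun y => ∫ ω, F y ω ∂μ) := by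
  refine ⟨hs, fun y₁ hy₁ y₂ hy₂ a b ha hb hab => ?_⟩
  have hint₁ := (hint y₁ hy₁).const_mul a
  have hint₂ := (hint y₂ hy₂).const_mul b
  rw [smul_eq_mul, smul_eq_mul, ← integral_const_mul, ← integral_const_mul,
    ← integral_add hint₁ hint₂]
  exact integral_mono (hint₁.add hint₂) (hint _ (hs hy₁ hy₂ ha hb hab)) fun ω => by
    simpa only [smul_eq_mul] using (hF ω).2 hy₁ hy₂ ha hb hab

lemma integrable_comp_of_abs_sub_le [IsFiniteMeasure μ] {φ : ℝ → ℝ} {L : ℝ}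
    (hφ : ∀ a b, |φ a - φ b| ≤ L * |a - b|) {X : Ω → ℝ} (hX : Integrable X μ) :
    Integrable (fun ω => φ (X ω)) μ := by
  have hcont : Continuous φ :=
    (LipschitzWith.of_dist_le' (K := L) fun a b => by simpa [Real.dist_eq] using hφ a b).continuous
  refine Integrable.mono' ((integrable_const |φ 0|).add (hX.abs.const_mul L))
    (hcont.comp_aestronglyMeasurable hX.1) (ae_of_all _ fun ω => ?_)
  have := hφ (X ω) 0
  rw [sub_zero] at this
  rw [Real.norm_eq_abs, Pi.add_apply]
  linarith [abs_sub_abs_le_abs_sub (φ (X ω)) (φ 0)]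

end Expectation

section Optimality

variable {f : ℝ → ℝ} {s : Set ℝ}

lemma ConcaveOn.le_add_mul_sub_of_hasDerivWithinAt {d x L : ℝ} (hf : ConcaveOn ℝ s f)
    (hd : d ∈ s) (hx : x ∈ s) (hL : HasDerivWithinAt f L s d) : f x ≤ f d + L * (x - d) := by
  rcases lt_trichotomy x d with h | rfl | h
  · have := hf.le_slope_of_hasDerivWithinAt hx hd h hL
    rw [slope_def_field, le_div_iff₀ (sub_pos.2 h)] at this
    linarith
  · simp
  · have := hf.slope_le_of_hasDerivWithinAt hd hx h hL
    rw [slope_def_field, div_le_iff₀ (sub_pos.2 h)] at this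
    linarith

/-- `d` plays the role of `max 0 (min m (L⁻¹ π))`, the clipped solution of `L d = π`. -/
lemma ConcaveOn.isMaxOn_sub_mul_of_clip {L : ℝ → ℝ} {m π d : ℝ} (hf : ConcaveOn ℝ (Icc 0 m) f)
    (hL : ∀ x ∈ Icc 0 m, HasDerivWithinAt f (L x) (Icc 0 m) x) (hd : d ∈ Icc 0 m)
    (hhi : π ≤ L m → d = m) (hlo : L 0 ≤ π → d = 0) (hmid : L m < π → π < L 0 → L d = π) :
    IsMaxOn (fun x => f x - π * x) (Icc 0 m) d := fun x hx => by
  have hvar : (L d - π) * (x - d) ≤ 0 := by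
    rcases le_or_gt π (L m) with h₁ | h₁
    · rw [hhi h₁]
      exact mul_nonpos_of_nonneg_of_nonpos (by linarith) (by linarith [hx.2])
    rcases le_or_gt (L 0) π with h₂ | h₂
    · rw [hlo h₂]
      exact mul_nonpos_of_nonpos_of_nonneg (by linarith) (by linarith [hx.1])
    · rw [hmid h₁ h₂, sub_self, zero_mul]
  have := hf.le_add_mul_sub_of_hasDerivWithinAt hd hx (hL d hd)
  show f x - π * x ≤ f d - π * d
  nlinarith

lemma ConcaveOn.le_of_isMaxOn_of_mem_uIcc {x₀ x c : ℝ} (hf : ConcaveOn ℝ s f) (hx₀ : x₀ ∈ s)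
    (hmax : IsMaxOn f s x₀) (hx : x ∈ s) (hc : c ∈ uIcc x₀ x) : f x ≤ f c := by
  rw [← segment_eq_uIcc] at hc
  simpa only [min_eq_right (isMaxOn_iff.1 hmax x hx)] using hf.min_le_of_mem_segment hx₀ hx hc

lemma ConcaveOn.isMaxOn_Icc_max_min {x₀ a b : ℝ} (hf : ConcaveOn ℝ s f) (hx₀ : x₀ ∈ s)
    (hmax : IsMaxOn f s x₀) (hab : Icc a b ⊆ s) : IsMaxOn f (Icc a b) (max a (min b x₀)) :=
  fun x hx => hf.le_of_isMaxOn_of_mem_uIcc hx₀ hmax (hab hx) <| by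
    rw [mem_uIcc]
    rcases le_total x₀ x with h | h
    · exact Or.inl ⟨le_max_of_le_right (le_min (h.trans hx.2) le_rfl),
        max_le hx.1 (min_le_of_right_le h)⟩
    · exact Or.inr ⟨le_max_of_le_right (le_min hx.2 h), max_le (hx.1.trans h) (min_le_right _ _)⟩

lemma isMaxOn_charge_of_neg_mem_superdiff {V : ℝ → ℝ} (hV : ConcaveOn ℝ (Ici 0) V)
    {π δ y b : ℝ} (hδ : 0 ≤ δ) (hπ : -π ∈ superdiff V δ) (hb : 0 ≤ b) :
    IsMaxOn (fun v => -π * v + V (y - v)) (Icc 0 (min b y)) (min b (max (y - δ) 0)) := by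
  have hconc : ConcaveOn ℝ (Iic y) (fun v => -π * v + V (y - v)) :=
    ⟨convex_Iic y, fun v₁ h₁ v₂ h₂ a c ha hc hac => by
      have := hV.2 (mem_Ici.2 (sub_nonneg.2 h₁)) (mem_Ici.2 (sub_nonneg.2 h₂)) ha hc hac
      simp only [smul_eq_mul] at this ⊢
      rw [show y - (a * v₁ + c * v₂) = a * (y - v₁) + c * (y - v₂) by
        linear_combination -y * hac]
      linarith⟩
  have hmax : IsMaxOn (fun v => -π * v + V (y - v)) (Iic y) (y - δ) := fun v hv => by
    have := hπ (y - v) (sub_nonneg.2 hv)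
    show -π * v + V (y - v) ≤ -π * (y - δ) + V (y - (y - δ))
    rw [sub_sub_cancel]
    linarith
  have := hconc.isMaxOn_Icc_max_min (a := 0) (b := min b y) (sub_le_self y hδ) hmax
    fun v hv => hv.2.trans (min_le_right _ _)
  rwa [min_assoc, min_eq_right (sub_le_self y hδ), max_min_distrib_left, max_eq_right hb,
    max_comm] at this

end Optimality

/-- Regularity of a value function `Φ y rt` (remaining demand `y`, renewables `rt`) that is
preserved by a step of the Bellman recursion. -/
structure IsRegularValue (γ : ℝ) (Φ : ℝ → ℝ → ℝ) : Prop where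
  exists_le_add_mul_abs : ∃ C, ∀ y rt, 0 ≤ y → Φ y rt ≤ C + γ * |rt|
  abs_sub_le : ∀ y, 0 ≤ y → ∀ a b, |Φ y a - Φ y b| ≤ γ * |a - b|
  concaveOn : ∀ rt, ConcaveOn ℝ (Ici 0) (Φ · rt)

namespace IsRegularValue

variable {Ω : Type*} [MeasurableSpace Ω] {μ : Measure Ω} [IsFiniteMeasure μ] {γ : ℝ}
  {Φ : ℝ → ℝ → ℝ} {X : Ω → ℝ}

lemma integrable_comp (hΦ : IsRegularValue γ Φ) (hX : Integrable X μ) {y : ℝ} (hy : 0 ≤ y) :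
    Integrable (fun ω => Φ y (X ω)) μ :=
  integrable_comp_of_abs_sub_le (hΦ.abs_sub_le y hy) hX

lemma concaveOn_integral (hΦ : IsRegularValue γ Φ) (hX : Integrable X μ) :
    ConcaveOn ℝ (Ici 0) (fun y => ∫ ω, Φ y (X ω) ∂μ) :=
  _root_.concaveOn_integral (convex_Ici 0) (fun ω => hΦ.concaveOn (X ω))
    fun _ hy => hΦ.integrable_comp hX hy

lemma exists_integral_le (hΦ : IsRegularValue γ Φ) (hX : Integrable X μ) :
    ∃ C, ∀ y, 0 ≤ y → ∫ ω, Φ y (X ω) ∂μ ≤ C := by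
  obtain ⟨C, hC⟩ := hΦ.exists_le_add_mul_abs
  exact ⟨∫ ω, (C + γ * |X ω|) ∂μ, fun y hy => integral_mono (hΦ.integrable_comp hX hy)
    ((integrable_const C).add (hX.abs.const_mul γ)) fun ω => hC y (X ω) hy⟩

end IsRegularValue

namespace EVModel

variable {K T : ℕ} {Ω : Type} [MeasurableSpace Ω] (M : EVModel K T Ω)

noncomputable def bellmanOp (t : ℕ) (G : ℝ → ℝ) (y rt : ℝ) : ℝ :=
  sSup ((fun p : ℝ × (Fin K → ℝ) => M.stage t rt p.1 p.2 + G (y - p.1)) '' M.feas y)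

lemma W_zero : M.W 0 = M.bellmanOp (T - 1) (fun z => -(M.γ * z)) := by
  ext y rt
  simp only [W, bellmanOp, sub_eq_add_neg]

lemma W_succ (k : ℕ) :
    M.W (k + 1) = M.bellmanOp (T - 2 - k) (fun z => ∫ ω, M.W k z (M.r (T - 1 - k) ω) ∂M.μ) :=
  rfl

lemma feas_nonempty {y : ℝ} (hy : 0 ≤ y) : (M.feas y).Nonempty :=
  ⟨(0, 0), ⟨le_rfl, le_min M.vbar_pos.le hy⟩, fun i => ⟨le_rfl, (M.dbar_pos i).le⟩⟩

lemma convex_feas_graph :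
    Convex ℝ {q : ℝ × (ℝ × (Fin K → ℝ)) | q.1 ∈ Ici 0 ∧ q.2 ∈ M.feas q.1} := by
  rintro ⟨y₁, v₁, d₁⟩ ⟨hy₁, ⟨hv₁, hvm₁⟩, hd₁⟩ ⟨y₂, v₂, d₂⟩ ⟨hy₂, ⟨hv₂, hvm₂⟩, hd₂⟩ a b ha hb hab
  rw [le_min_iff] at hvm₁ hvm₂
  refine ⟨convex_Ici (0 : ℝ) hy₁ hy₂ ha hb hab, ⟨convex_Ici (0 : ℝ) hv₁ hv₂ ha hb hab, le_min_iff.2 ⟨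
    convex_Iic M.vbar hvm₁.1 hvm₂.1 ha hb hab, ?_⟩⟩,
    fun i => convex_Icc 0 (M.dbar i) (hd₁ i) (hd₂ i) ha hb hab⟩
  simp only [Prod.smul_mk, Prod.mk_add_mk, smul_eq_mul]
  nlinarith [mul_le_mul_of_nonneg_left hvm₁.2 ha, mul_le_mul_of_nonneg_left hvm₂.2 hb]

lemma concaveOn_stage {t : ℕ} (hp : M.pim t ≤ M.pip t) (rt : ℝ) :
    ConcaveOn ℝ {p : ℝ × (Fin K → ℝ) | ∀ i, p.2 i ∈ Icc 0 (M.dbar i)}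
      (fun p => M.stage t rt p.1 p.2) := by
  have hbox : Convex ℝ {p : ℝ × (Fin K → ℝ) | ∀ i, p.2 i ∈ Icc 0 (M.dbar i)} :=
    fun p₁ h₁ p₂ h₂ a b ha hb hab i => convex_Icc _ _ (h₁ i) (h₂ i) ha hb hab
  have hU : ConcaveOn ℝ {p : ℝ × (Fin K → ℝ) | ∀ i, p.2 i ∈ Icc 0 (M.dbar i)}
      (fun p => ∑ i, M.U i (p.2 i)) := ⟨hbox, fun p₁ h₁ p₂ h₂ a b ha hb hab => by
    simp only [smul_eq_mul, Finset.mul_sum, ← Finset.sum_add_distrib]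
    exact Finset.sum_le_sum fun i _ => (M.U_strictConcave i).concaveOn.2 (h₁ i) (h₂ i) ha hb hab⟩
  have hP : ConvexOn ℝ {p : ℝ × (Fin K → ℝ) | ∀ i, p.2 i ∈ Icc 0 (M.dbar i)}
      (fun p => NEMPayment (M.pip t) (M.pim t) (p.1 + ∑ i, p.2 i - rt)) :=
    ⟨hbox, fun p₁ _ p₂ _ a b ha hb hab => by
      convert (convexOn_NEMPayment hp).2 (mem_univ (p₁.1 + ∑ i, p₁.2 i - rt))
        (mem_univ (p₂.1 + ∑ i, p₂.2 i - rt)) ha hb hab using 2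
      simp only [Prod.fst_add, Prod.snd_add, Prod.smul_fst, Prod.smul_snd, Pi.add_apply,
        Pi.smul_apply, smul_eq_mul, Finset.sum_add_distrib, ← Finset.mul_sum]
      linear_combination rt * hab⟩
  exact hU.sub hP

lemma concaveOn_bellman_objective {t : ℕ} (hp : M.pim t ≤ M.pip t) {G : ℝ → ℝ}
    (hG : ConcaveOn ℝ (Ici 0) G) (rt : ℝ) :
    ConcaveOn ℝ {q : ℝ × (ℝ × (Fin K → ℝ)) | q.1 ∈ Ici 0 ∧ q.2 ∈ M.feas q.1}
      (fun q => M.stage t rt q.2.1 q.2.2 + G (q.1 - q.2.1)) := by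
  have hstage := ((M.concaveOn_stage hp rt).comp_linearMap (LinearMap.snd ℝ ℝ _)).subset
    (fun q hq => hq.2.2) M.convex_feas_graph
  have hcont := (hG.comp_linearMap (LinearMap.fst ℝ ℝ _ -
    (LinearMap.fst ℝ ℝ _).comp (LinearMap.snd ℝ ℝ (ℝ × (Fin K → ℝ))))).subset
    (fun q hq => show (0 : ℝ) ≤ q.1 - q.2.1 from
      sub_nonneg.2 ((min_le_right _ _).trans' hq.2.1.2))
    M.convex_feas_graph
  exact hstage.add hcont

lemma stage_le {t : ℕ} (ht : t < T) (rt : ℝ) {y : ℝ} {p : ℝ × (Fin K → ℝ)}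
    (hp : p ∈ M.feas y) : M.stage t rt p.1 p.2 ≤ ∑ i, M.U i (M.dbar i) + M.γ * |rt| := by
  obtain ⟨hpm, hpmpp, hppγ⟩ := M.A1 t ht
  have hU : ∑ i, M.U i (p.2 i) ≤ ∑ i, M.U i (M.dbar i) := Finset.sum_le_sum fun i _ =>
    (M.U_strictMono i).monotoneOn (hp.2 i) ⟨(M.dbar_pos i).le, le_rfl⟩ (hp.2 i).2
  have hz : 0 ≤ p.1 + ∑ i, p.2 i := add_nonneg hp.1.1 (Finset.sum_nonneg fun i _ => (hp.2 i).1)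
  have hP := mul_le_NEMPayment hpmpp (p.1 + ∑ i, p.2 i - rt)
  have hrt : M.pim t * rt ≤ M.γ * |rt| := (mul_le_mul_of_nonneg_left (le_abs_self rt) hpm.le).trans
    (mul_le_mul_of_nonneg_right (by linarith) (abs_nonneg rt))
  unfold stage
  nlinarith [mul_nonneg hpm.le hz]

lemma abs_stage_sub_le {t : ℕ} (ht : t < T) (a b v : ℝ) (d : Fin K → ℝ) :
    |M.stage t a v d - M.stage t b v d| ≤ M.γ * |a - b| := by
  obtain ⟨hpm, hpmpp, hppγ⟩ := M.A1 t ht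
  have h := abs_NEMPayment_sub_le hpm.le hpmpp (v + ∑ i, d i - b) (v + ∑ i, d i - a)
  rw [show v + ∑ i, d i - b - (v + ∑ i, d i - a) = a - b by ring] at h
  rw [stage, stage, sub_sub_sub_cancel_left]
  exact h.trans (mul_le_mul_of_nonneg_right hppγ.le (abs_nonneg _))

theorem isRegularValue_bellmanOp {t : ℕ} (ht : t < T) {G : ℝ → ℝ} (hG : ConcaveOn ℝ (Ici 0) G)
    (hGC : ∃ C, ∀ z, 0 ≤ z → G z ≤ C) : IsRegularValue M.γ (M.bellmanOp t G) := by
  obtain ⟨C, hC⟩ := hGC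
  have hobj : ∀ y rt, ∀ p ∈ M.feas y,
      M.stage t rt p.1 p.2 + G (y - p.1) ≤ ∑ i, M.U i (M.dbar i) + C + M.γ * |rt| :=
    fun y rt p hp => by
      have := M.stage_le ht rt hp
      have := hC (y - p.1) (sub_nonneg.2 ((min_le_right _ _).trans' hp.1.2))
      linarith
  have hbdd : ∀ y rt, BddAbove
      ((fun p : ℝ × (Fin K → ℝ) => M.stage t rt p.1 p.2 + G (y - p.1)) '' M.feas y) :=
    fun y rt => ⟨_, forall_mem_image.2 (hobj y rt)⟩
  refine ⟨⟨∑ i, M.U i (M.dbar i) + C, fun y rt hy =>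
      csSup_le ((M.feas_nonempty hy).image _) (forall_mem_image.2 (hobj y rt))⟩,
    fun y hy a b => abs_sSup_image_sub_le (M.feas_nonempty hy) (hbdd y a) (hbdd y b)
      fun p _ => ?_,
    fun rt => ConcaveOn.sSup_image (convex_Ici 0)
      (M.concaveOn_bellman_objective (M.A1 t ht).2.1 hG rt) (fun y hy => M.feas_nonempty hy)
      fun y _ => hbdd y rt⟩
  simpa only [add_sub_add_right_eq_sub] using M.abs_stage_sub_le ht a b p.1 p.2

theorem isRegularValue_W (hT : 0 < T) (k : ℕ) : IsRegularValue M.γ (M.W k) := by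
  induction k with
  | zero =>
    obtain ⟨hpm, hpmpp, hppγ⟩ := M.A1 (T - 1) (by omega)
    rw [W_zero]
    exact M.isRegularValue_bellmanOp (by omega)
      ((LinearMap.mulLeft ℝ M.γ).convexOn (convex_Ici 0)).neg
      ⟨0, fun z hz => neg_nonpos.2 (mul_nonneg (by linarith) hz)⟩
  | succ k ih =>
    have := M.prob
    rw [W_succ]
    exact M.isRegularValue_bellmanOp (by omega) (ih.concaveOn_integral (M.r_int _))
      (ih.exists_integral_le (M.r_int _))

lemma concaveOn_Vbar (hT : 0 < T) (t : ℕ) : ConcaveOn ℝ (Ici 0) (M.Vbar t) :=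
  haveI := M.prob
  (M.isRegularValue_W hT (T - 1 - t)).concaveOn_integral (M.r_int t)

/-- The objective of the program `P⁻`, in which all net consumption is priced at `π_t⁻`. -/
noncomputable def sellObjective (t : ℕ) (y rt : ℝ) (p : ℝ × (Fin K → ℝ)) : ℝ :=
  ∑ i, M.U i (p.2 i) - M.pim t * (p.1 + ∑ i, p.2 i - rt) + M.Vbar (t + 1) (y - p.1)

lemma sellObjective_eq (t : ℕ) (y rt : ℝ) (p : ℝ × (Fin K → ℝ)) :
    M.sellObjective t y rt p = ∑ i, (M.U i (p.2 i) - M.pim t * p.2 i) +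
      (-M.pim t * p.1 + M.Vbar (t + 1) (y - p.1)) + M.pim t * rt := by
  simp only [sellObjective, Finset.sum_sub_distrib, ← Finset.mul_sum]
  ring

lemma bellObj_eq_stage_add {t : ℕ} (ht : t ≠ T - 1) (y rt : ℝ) (p : ℝ × (Fin K → ℝ)) :
    M.bellObj t y rt p = M.stage t rt p.1 p.2 + M.Vbar (t + 1) (y - p.1) :=
  if_neg ht

lemma bellObj_le_sellObjective {t : ℕ} (ht : t < T - 1) (y rt : ℝ) (p : ℝ × (Fin K → ℝ)) :
    M.bellObj t y rt p ≤ M.sellObjective t y rt p := by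
  have := mul_le_NEMPayment (M.A1 t (by omega)).2.1 (p.1 + ∑ i, p.2 i - rt)
  rw [M.bellObj_eq_stage_add ht.ne, stage, sellObjective]
  linarith

lemma bellObj_eq_sellObjective {t : ℕ} (ht : t < T - 1) {y rt : ℝ} {p : ℝ × (Fin K → ℝ)}
    (hp : p.1 + ∑ i, p.2 i ≤ rt) : M.bellObj t y rt p = M.sellObjective t y rt p := by
  rw [M.bellObj_eq_stage_add ht.ne, stage, NEMPayment_of_nonpos (by linarith)]
  rfl

theorem isMaxOn_sellObjective (hT : 0 < T) (L : Fin K → ℝ → ℝ)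
    (hL : ∀ i, ∀ x ∈ Icc 0 (M.dbar i), HasDerivWithinAt (M.U i) (L i x) (Icc 0 (M.dbar i)) x)
    (l : Fin K → ℝ → ℝ) (hl_mem : ∀ i π, l i π ∈ Icc 0 (M.dbar i))
    (hl_hi : ∀ i π, π ≤ L i (M.dbar i) → l i π = M.dbar i)
    (hl_lo : ∀ i π, L i 0 ≤ π → l i π = 0)
    (hl_mid : ∀ i π, L i (M.dbar i) < π → π < L i 0 → L i (l i π) = π)
    (t : ℕ) (y rt : ℝ) {δ : ℝ} (hδ : 0 ≤ δ) (hδh : -M.pim t ∈ M.h (t + 1) δ) :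
    IsMaxOn (M.sellObjective t y rt) (M.feas y)
      (min M.vbar (max (y - δ) 0), fun i => l i (M.pim t)) := fun q hq => by
  have hd := Finset.sum_le_sum fun i (_ : i ∈ Finset.univ) => isMaxOn_iff.1
    ((M.U_strictConcave i).concaveOn.isMaxOn_sub_mul_of_clip (hL i) (hl_mem i (M.pim t))
      (hl_hi i (M.pim t)) (hl_lo i (M.pim t)) (hl_mid i (M.pim t))) _ (hq.2 i)
  have hv := isMaxOn_iff.1 (isMaxOn_charge_of_neg_mem_superdiff (M.concaveOn_Vbar hT (t + 1)) hδ
    hδh M.vbar_pos.le) q.1 hq.1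
  show M.sellObjective t y rt q ≤ M.sellObjective t y rt _
  rw [sellObjective_eq, sellObjective_eq]
  dsimp only at hv ⊢
  linarith

end EVModel

theorem thm1_net_production_zone_general (K T : ℕ) (Ω : Type) [MeasurableSpace Ω]
    (M : EVModel K T Ω)
    -- `L i` is the marginal utility `U_i'` on `[0, d̄_i]`
    (L : Fin K → ℝ → ℝ)
    (hL : ∀ i, ∀ x ∈ Set.Icc 0 (M.dbar i),
      HasDerivWithinAt (M.U i) (L i x) (Set.Icc 0 (M.dbar i)) x)
    -- `l i π = max {0, min {d̄_i, L_i⁻¹(π)}}`, characterized by clipping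
    (l : Fin K → ℝ → ℝ)
    (hl_mem : ∀ i π, l i π ∈ Set.Icc 0 (M.dbar i))
    (hl_hi : ∀ i π, π ≤ L i (M.dbar i) → l i π = M.dbar i)
    (hl_lo : ∀ i π, L i 0 ≤ π → l i π = 0)
    (hl_mid : ∀ i π, L i (M.dbar i) < π → π < L i 0 → L i (l i π) = π)
    (t : ℕ) (ht : t < T - 1) (y : ℝ) (hy : 0 ≤ y) (rt : ℝ)
    (δ : ℝ) (hδ : δ ∈ Set.Icc 0 (((T - t - 1 : ℕ) : ℝ) * M.vbar))
    (hδh : -M.pim t ∈ M.h (t + 1) δ)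
    -- the net-production zone condition: `v* + ∑ i d*_i < r_t`
    (hzone : min M.vbar (max (y - δ) 0) + (∑ i, l i (M.pim t)) < rt) :
    M.IsBellmanOpt t y rt (min M.vbar (max (y - δ) 0), fun i => l i (M.pim t)) ∧
      IsMaxOn
        (fun p : ℝ × (Fin K → ℝ) =>
          ∑ i, M.U i (p.2 i) - M.pim t * (p.1 + ∑ i, p.2 i - rt) + M.Vbar (t + 1) (y - p.1))
        {p | p ∈ M.feas y ∧ p.1 + ∑ i, p.2 i ≤ rt}
        (min M.vbar (max (y - δ) 0), fun i => l i (M.pim t)) := by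
  have hmax := M.isMaxOn_sellObjective (by omega) L hL l hl_mem hl_hi hl_lo hl_mid t y rt hδ.1 hδh
  have hv : min M.vbar (max (y - δ) 0) ∈ Icc 0 (min M.vbar y) :=
    ⟨le_min M.vbar_pos.le (le_max_right _ _), min_le_min_left _ (max_le (by linarith [hδ.1]) hy)⟩
  refine ⟨⟨⟨hv, fun i => hl_mem i _⟩, fun q hq => ?_⟩, hmax.on_subset fun q hq => hq.1⟩
  calc M.bellObj t y rt q ≤ M.sellObjective t y rt q := M.bellObj_le_sellObjective ht y rt q
    _ ≤ M.sellObjective t y rt _ := hmax hq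
    _ = M.bellObj t y rt _ := (M.bellObj_eq_sellObjective ht hzone.le).symm

/-- **Theorem 1, net production zone.**
Let `δ_t ∈ [0, (T - t - 1) v̄]` satisfy `-π_t⁻ ∈ h_{t+1}(δ_t)`.  Then
`d*_i = l_i(π_t⁻)` together with `v* = min {v̄, max {y_t - δ_t, 0}}` is optimal for the
Bellman equation at time `t` whenever `v* + ∑ i d*_i < r_t`; equivalently `(v*, d*)`
solves the convex program `P⁻` (maximize over `v + ∑ d ≤ r_t`) with the
net-production constraint inactive. -/
theorem thm1_net_production_zone (K T : ℕ) (Ω : Type) [MeasurableSpace Ω]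
    (M : EVModel K T Ω)
    -- `L i` is the marginal utility `U_i'` on `[0, d̄_i]`
    (L : Fin K → ℝ → ℝ)
    (hL : ∀ i, ∀ x ∈ Set.Icc 0 (M.dbar i),
      HasDerivWithinAt (M.U i) (L i x) (Set.Icc 0 (M.dbar i)) x)
    (hLcont : ∀ i, ContinuousOn (L i) (Set.Icc 0 (M.dbar i)))
    -- `l i π = max {0, min {d̄_i, L_i⁻¹(π)}}`, characterized by clipping
    (l : Fin K → ℝ → ℝ)
    (hl_mem : ∀ i π, l i π ∈ Set.Icc 0 (M.dbar i))
    (hl_hi : ∀ i π, π ≤ L i (M.dbar i) → l i π = M.dbar i)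
    (hl_lo : ∀ i π, L i 0 ≤ π → l i π = 0)
    (hl_mid : ∀ i π, L i (M.dbar i) < π → π < L i 0 → L i (l i π) = π)
    (t : ℕ) (ht : t < T - 1) (y : ℝ) (hy : 0 ≤ y) (rt : ℝ) (hrt : 0 ≤ rt)
    (δ : ℝ) (hδ : δ ∈ Set.Icc 0 (((T - t - 1 : ℕ) : ℝ) * M.vbar))
    (hδh : -M.pim t ∈ M.h (t + 1) δ)
    -- the net-production zone condition: `v* + ∑ i d*_i < r_t`
    (hzone : min M.vbar (max (y - δ) 0) + (∑ i, l i (M.pim t)) < rt) :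
    M.IsBellmanOpt t y rt (min M.vbar (max (y - δ) 0), fun i => l i (M.pim t)) ∧
      IsMaxOn
        (fun p : ℝ × (Fin K → ℝ) =>
          ∑ i, M.U i (p.2 i) - M.pim t * (p.1 + ∑ i, p.2 i - rt) + M.Vbar (t + 1) (y - p.1))
        {p | p ∈ M.feas y ∧ p.1 + ∑ i, p.2 i ≤ rt}
        (min M.vbar (max (y - δ) 0), fun i => l i (M.pim t)) :=
  thm1_net_production_zone_general K T Ω M L hL l hl_mem hl_hi hl_lo hl_mid t ht y hy rt δ hδ hδh
    hzone
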